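/- Let k ≥ 3, m : ℝ, and let ω : Fin k → ℝ be a weight vector with ω₂ = 0. If T_m(P_{n,ω}) = 0 for all n ≥ 1, then either ω_j = 0 for all 1 ≤ j ≤ k, or m = 1. -/

import Mathlib

open MvPolynomial Finset

/-- The weight coefficient `A_ω(α)` of Theorem 2.1 (for `α ≠ 0`):
`A_ω(α) = multinomial(α) · (Σ α_i ω_i) / (Σ α_i)`. -/
noncomputable def Aw {k : ℕ} (ω : Fin k → ℝ) (α : Fin k → ℕ) : ℝ :=
  (Nat.multinomial Finset.univ α : ℝ) * (∑ i, (α i : ℝ) * ω i) / (∑ i, (α i : ℝ))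

/-- The isobaric degree `Σ_{i=1}^k i·α_i` of an exponent vector. -/
def isoDeg {k : ℕ} (α : Fin k → ℕ) : ℕ := ∑ i, (i.1 + 1) * α i

/-- The (finite) set of exponent vectors of isobaric degree `n`. -/
def wipIndex (k n : ℕ) : Finset (Fin k → ℕ) :=
  (Fintype.piFinset fun _ : Fin k => Finset.range (n + 1)).filter fun α => isoDeg α = n

/-- The weighted isobaric polynomial `P_{n,ω} = Σ_α A_ω(α)·t^α`. -/
noncomputable def WIP (k n : ℕ) (ω : Fin k → ℝ) : MvPolynomial (Fin k) ℝ :=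
  ∑ α ∈ wipIndex k n, MvPolynomial.monomial (Finsupp.equivFunOnFinite.symm α) (Aw ω α)

/-- The operator `T_m(P) = D₁₁P − Σ_j t_j D_{2j}P − m·D₂P`. -/
noncomputable def Tm (k : ℕ) (hk : 2 ≤ k) (m : ℝ) (P : MvPolynomial (Fin k) ℝ) :
    MvPolynomial (Fin k) ℝ :=
  pderiv (⟨0, by omega⟩ : Fin k) (pderiv (⟨0, by omega⟩ : Fin k) P)
    - ∑ j : Fin k, X j * pderiv (⟨1, by omega⟩ : Fin k) (pderiv j P)
    - C m * pderiv (⟨1, by omega⟩ : Fin k) P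

/-- The `j`-th element `γ^{(j)}` of the string generated by `γ`. -/
def strElem (k : ℕ) (hk : 2 ≤ k) (γ : Fin k → ℕ) (j : ℕ) : Fin k → ℕ :=
  fun i => if i = (⟨0, by omega⟩ : Fin k) then γ i + 2 * j
    else if i = (⟨1, by omega⟩ : Fin k) then γ i - j else γ i

/-- The `ω`-weighted string generated by `γ`:
`S_ω(γ) = Σ_{j=0}^{γ₂} A_ω(γ^{(j)})·t^{γ^{(j)}}`. -/
noncomputable def strPoly (k : ℕ) (hk : 2 ≤ k) (ω : Fin k → ℝ) (γ : Fin k → ℕ) :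
    MvPolynomial (Fin k) ℝ :=
  ∑ j ∈ Finset.range (γ (⟨1, by omega⟩ : Fin k) + 1),
    MvPolynomial.monomial (Finsupp.equivFunOnFinite.symm (strElem k hk γ j))
      (Aw ω (strElem k hk γ j))

/-! The proof reads off two coefficients. Because `Σ_j t_j ∂_j` is the Euler operator and `∂₂`
commutes with `∂_j`, the coefficient of `t^d` in `T_m P` is
`(d₁+1)(d₁+2)·[t^{d+2e₁}]P − (|d|+m)(d₂+1)·[t^{d+e₂}]P`, while `[t^α]P_{n,ω} = A_ω(α)` for `α` of
isobaric degree `n`. The constant term of `T_m P_{2,ω}` is `2ω₁ − mω₂ = 2ω₁`, so `ω₁ = 0`; for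
`j ≥ 3` the coefficient of `t_j` in `T_m P_{j+2,ω}` is `2(2ω₁+ω_j) − (1+m)(ω₂+ω_j) = (1−m)ω_j`. -/

namespace MvPolynomial

variable {σ R : Type*} [CommSemiring R]

theorem pderiv_pderiv_comm (i j : σ) (p : MvPolynomial σ R) :
    pderiv i (pderiv j p) = pderiv j (pderiv i p) := by
  classical
  by_cases hij : i = j
  · rw [hij]
  ext d
  simp only [coeff_pderiv, Finsupp.add_apply, Finsupp.single_apply, hij, Ne.symm hij,
    if_false, add_zero, add_right_comm d]
  ring

theorem coeff_sum_X_mul_pderiv [Fintype σ] (p : MvPolynomial σ R) (d : σ →₀ ℕ) :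
    coeff d (∑ j, X j * pderiv j p) = (∑ j, (d j : R)) * coeff d p := by
  classical
  induction p using MvPolynomial.induction_on' with
  | add p q hp hq => simp only [map_add, mul_add, Finset.sum_add_distrib, coeff_add, hp, hq]
  | monomial s a =>
    simp only [X_mul_pderiv_monomial, smul_monomial, coeff_sum, coeff_monomial, nsmul_eq_mul]
    split_ifs with h
    · rw [Finset.sum_mul, h]
    · simp

end MvPolynomial

section

variable {k : ℕ}

theorem coeff_Tm (hk : 2 ≤ k) (m : ℝ) (P : MvPolynomial (Fin k) ℝ) (d : Fin k →₀ ℕ) :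
    coeff d (Tm k hk m P) =
      (d ⟨0, by omega⟩ + 1) * (d ⟨0, by omega⟩ + 2) *
          coeff (d + Finsupp.single ⟨0, by omega⟩ 2) P -
        (∑ j, (d j : ℝ) + m) * (d ⟨1, by omega⟩ + 1) *
          coeff (d + Finsupp.single ⟨1, by omega⟩ 1) P := by
  have h2 : Finsupp.single (⟨0, by omega⟩ : Fin k) 1 + Finsupp.single ⟨0, by omega⟩ 1 =
      Finsupp.single ⟨0, by omega⟩ 2 := by rw [← Finsupp.single_add]
  simp_rw [Tm, pderiv_pderiv_comm (⟨1, by omega⟩ : Fin k), coeff_sub, coeff_sum_X_mul_pderiv,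
    coeff_C_mul, coeff_pderiv, Finsupp.add_apply, Finsupp.single_eq_same, add_assoc, h2]
  push_cast
  ring

theorem mem_wipIndex {n : ℕ} {α : Fin k → ℕ} : α ∈ wipIndex k n ↔ isoDeg α = n := by
  refine ⟨fun h => (Finset.mem_filter.1 h).2, fun h => Finset.mem_filter.2 ⟨?_, h⟩⟩
  refine Fintype.mem_piFinset.2 fun i => Finset.mem_range.2 (Nat.lt_succ_of_le ?_)
  calc α i ≤ (i.1 + 1) * α i := Nat.le_mul_of_pos_left _ i.1.succ_pos
    _ ≤ isoDeg α := Finset.single_le_sum (f := fun i => (i.1 + 1) * α i) (by simp) (by simp)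
    _ = n := h

theorem coeff_WIP (n : ℕ) (ω : Fin k → ℝ) (d : Fin k →₀ ℕ) :
    coeff d (WIP k n ω) = if isoDeg d = n then Aw ω d else 0 := by
  simp only [WIP, coeff_sum, coeff_monomial, Equiv.symm_apply_eq, Finset.sum_ite_eq', mem_wipIndex]
  rfl

theorem isoDeg_add (α β : Fin k → ℕ) : isoDeg (α + β) = isoDeg α + isoDeg β := by
  simp only [isoDeg, Pi.add_apply, mul_add, Finset.sum_add_distrib]

theorem isoDeg_single (i : Fin k) (c : ℕ) : isoDeg (Finsupp.single i c) = (i.1 + 1) * c := by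
  simp [isoDeg, Finsupp.single_apply]

theorem Aw_single (ω : Fin k → ℝ) (i : Fin k) {c : ℕ} (hc : c ≠ 0) :
    Aw ω (Finsupp.single i c) = ω i := by
  have hc' : (c : ℝ) ≠ 0 := Nat.cast_ne_zero.2 hc
  simp [Aw, Finsupp.single_eq_pi_single, Nat.multinomial_single, Pi.single_apply]
  field_simp

theorem Aw_single_add_single (ω : Fin k → ℝ) {i j : Fin k} (hij : i ≠ j) (a b : ℕ) :
    Aw ω (Finsupp.single i a + Finsupp.single j b) =
      (a + b).choose a * (a * ω i + b * ω j) / (a + b) := by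
  have hmult : Nat.multinomial Finset.univ (Finsupp.single i a + Finsupp.single j b : Fin k → ℕ) =
      (a + b).choose a := by
    rw [← Nat.multinomial_congr_of_sdiff (Finset.subset_univ {i, j}) (fun l hl => ?_)
      (fun _ _ => rfl), Nat.binomial_eq_choose hij]
    · simp [hij, Ne.symm hij]
    · simp only [Finset.mem_sdiff, Finset.mem_insert, Finset.mem_singleton, not_or] at hl
      simp [Ne.symm hl.2.1, Ne.symm hl.2.2]
  rw [Aw, hmult]
  simp [Finsupp.single_apply, add_mul, Finset.sum_add_distrib]

theorem coeff_zero_Tm_WIP_two (hk : 2 ≤ k) (m : ℝ) (ω : Fin k → ℝ) :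
    coeff 0 (Tm k hk m (WIP k 2 ω)) = 2 * ω ⟨0, by omega⟩ - m * ω ⟨1, by omega⟩ := by
  rw [coeff_Tm, coeff_WIP, coeff_WIP, zero_add, zero_add, isoDeg_single, isoDeg_single,
    Aw_single ω _ two_ne_zero, Aw_single ω _ one_ne_zero]
  simp

theorem coeff_single_Tm_WIP (hk : 2 ≤ k) (m : ℝ) (ω : Fin k → ℝ) (i : Fin k) (hi : 2 ≤ i.1) :
    coeff (Finsupp.single i 1) (Tm k hk m (WIP k (i + 3) ω)) =
      2 * (2 * ω ⟨0, by omega⟩ + ω i) - (1 + m) * (ω ⟨1, by omega⟩ + ω i) := by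
  have h0 : (⟨0, by omega⟩ : Fin k) ≠ i := Fin.ne_of_val_ne (show 0 ≠ i.1 by omega)
  have h1 : (⟨1, by omega⟩ : Fin k) ≠ i := Fin.ne_of_val_ne (show 1 ≠ i.1 by omega)
  rw [coeff_Tm, coeff_WIP, coeff_WIP, add_comm (Finsupp.single i 1), add_comm (Finsupp.single i 1),
    Finsupp.coe_add, Finsupp.coe_add, Aw_single_add_single ω h0, Aw_single_add_single ω h1,
    isoDeg_add, isoDeg_add, isoDeg_single, isoDeg_single, isoDeg_single, if_pos (by ring),
    if_pos (by ring)]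
  simp only [ne_eq, h0, h1, not_false_eq_true, Finsupp.single_eq_of_ne, Finsupp.single_apply,
    CharP.cast_eq_zero, zero_add, add_zero, one_mul, mul_one, Nat.choose, Nat.reduceAdd,
    Nat.cast_ofNat, Nat.cast_one, Nat.cast_ite, sum_ite_eq, mem_univ, ↓reduceIte]
  ring

end

/-- The remark after Theorem 4.3: if `ω₂ = 0` and `T_m` annihilates the whole
weighted sequence, then either `ω = 0` or `m = 1`. -/
theorem omega_two_zero_case (k : ℕ) (hk : 3 ≤ k) (m : ℝ) (ω : Fin k → ℝ)
    (hω : ω (⟨1, by omega⟩ : Fin k) = 0)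
    (h : ∀ n, 1 ≤ n → Tm k (by omega) m (WIP k n ω) = 0) :
    (∀ j, ω j = 0) ∨ m = 1 := by
  refine or_iff_not_imp_right.2 fun hm => ?_
  have hω₀ : ω ⟨0, by omega⟩ = 0 := by
    have h₂ := congrArg (coeff 0) (h 2 (by norm_num))
    rw [coeff_zero_Tm_WIP_two, hω, coeff_zero] at h₂
    linarith
  rintro ⟨_ | _ | i, hi⟩
  · exact hω₀
  · exact hω
  · have hₙ := congrArg (coeff (Finsupp.single ⟨i + 2, hi⟩ 1)) (h (i + 5) (by omega))
    rw [coeff_single_Tm_WIP _ m ω _ (Nat.le_add_left 2 i), hω₀, hω, coeff_zero] at hₙ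
    have : (1 - m) * ω ⟨i + 2, hi⟩ = 0 := by linarith
    exact (mul_eq_zero.1 this).resolve_left (sub_ne_zero.2 (Ne.symm hm))
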